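/- arXiv:1901.09665 — 2 statements merged into one kernel-verified Lean document; each statement's English description precedes it below -/
import Mathlib

section
/- Let s ≥ 1 and let p : Fin s → ℝ be strictly positive with ∑_j p_j = 1. Fix n ≥ 1 and 1 ≤ l ≤ n. In the two-stage experiment where J is drawn with P(J = j) = p_j and then, given J = j, N − 1 ∼ Binomial(n − 1, p_j), the posterior expectation of the population frequency of a species represented l times in the sample satisfies E[p_J | N = l] = ∑_{j=1}^{s} p_j^{l+1} (1 − p_j)^{n−l} / ∑_{j=1}^{s} p_j^l (1 − p_j)^{n−l}. -/
open MeasureTheory ProbabilityTheory ENNReal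

/-- In Good's two-stage experiment — first a species `J` is picked with
prior `P(J = j) = p j`, then given `J = j` the total number of occurrences `N` of that
species in an `n`-sample satisfies `N - 1 ~ Binomial(n-1, p j)` — the posterior
expectation of the population frequency of a species represented `l` times is
`∑_j p_j^(l+1) (1-p_j)^(n-l) / ∑_j p_j^l (1-p_j)^(n-l)`. -/
theorem good_posterior_expectation
    {Ω : Type*} [MeasurableSpace Ω] (μ : Measure Ω) [IsProbabilityMeasure μ]
    (s : ℕ) (hs : 1 ≤ s) (p : Fin s → ℝ)
    (hp_pos : ∀ j, 0 < p j) (hp_sum : ∑ j, p j = 1)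
    (n l : ℕ) (hn : 1 ≤ n) (hl : 1 ≤ l) (hln : l ≤ n)
    (J : Ω → Fin s) (N : Ω → ℕ)
    (hJ_meas : Measurable J) (hN_meas : Measurable N)
    (hN_pos : μ {ω | N ω = 0} = 0)
    (hJoint : ∀ (j : Fin s) (m : ℕ),
      μ {ω | J ω = j ∧ N ω = m + 1}
        = ENNReal.ofReal (p j * ((n - 1).choose m : ℝ) * p j ^ m * (1 - p j) ^ (n - 1 - m))) :
    ∫ ω, p (J ω) ∂(μ[|{ω | N ω = l}])
      = (∑ j, p j ^ (l + 1) * (1 - p j) ^ (n - l))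
          / ∑ j, p j ^ l * (1 - p j) ^ (n - l) := by
  set A : Set Ω := {ω | N ω = l} with hA_def
  have hA_meas : MeasurableSet A := hN_meas (measurableSet_singleton l)
  set C : ℝ := ((n - 1).choose (l - 1) : ℝ) with hC_def
  have hC_pos : 0 < C := by
    have : l - 1 ≤ n - 1 := by omega
    exact_mod_cast Nat.cast_pos.mpr (Nat.choose_pos this)
  set c : Fin s → ℝ := fun j => p j ^ l * (1 - p j) ^ (n - l) with hc_def
  have hple : ∀ j, p j ≤ 1 := by
    intro j
    rw [← hp_sum]
    exact Finset.single_le_sum (fun i _ => (hp_pos i).le) (Finset.mem_univ j)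
  have hc_nonneg : ∀ j, 0 ≤ c j := fun j =>
    mul_nonneg (pow_nonneg (hp_pos j).le _) (pow_nonneg (by linarith [hple j]) _)
  -- joint at N = l
  have hjl : ∀ j, μ {ω | J ω = j ∧ N ω = l} = ENNReal.ofReal (C * c j) := by
    intro j
    have h := hJoint j (l - 1)
    have hl1 : l - 1 + 1 = l := by omega
    rw [hl1] at h
    rw [h]
    congr 1
    have hnl : n - 1 - (l - 1) = n - l := by omega
    rw [hnl, hc_def, hC_def]
    have h2 : p j ^ l = p j * p j ^ (l - 1) := by
      rw [← pow_succ']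
      congr 1
      omega
    simp only [h2]
    ring
  -- measure of A
  have hA_union : A = ⋃ j, {ω | J ω = j ∧ N ω = l} := by
    ext ω
    simp only [Set.mem_iUnion, Set.mem_setOf_eq, hA_def]
    constructor
    · intro h; exact ⟨J ω, rfl, h⟩
    · rintro ⟨j, _, h⟩; exact h
  have hA_measure : μ A = ENNReal.ofReal (C * ∑ j, c j) := by
    rw [hA_union, measure_iUnion, tsum_fintype]
    · rw [Finset.mul_sum, ENNReal.ofReal_sum_of_nonneg
        (fun j _ => mul_nonneg hC_pos.le (hc_nonneg j))]
      exact Finset.sum_congr rfl fun j _ => hjl j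
    · intro i j hij
      simp only [Set.disjoint_left, Set.mem_setOf_eq]
      rintro ω ⟨h1, _⟩ ⟨h2, _⟩
      exact hij (h1 ▸ h2 ▸ rfl)
    · intro j
      exact (hJ_meas (measurableSet_singleton j)).inter (hN_meas (measurableSet_singleton l))
  by_cases hS : ∑ j, c j = 0
  -- degenerate case: the event has probability zero
  · have hμA : μ A = 0 := by rw [hA_measure, hS, mul_zero, ENNReal.ofReal_zero]
    have hcond : μ[|A] = 0 := by
      rw [ProbabilityTheory.cond, Measure.restrict_eq_zero.mpr hμA, smul_zero]
    rw [hcond, integral_zero_measure,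
      show (∑ j, p j ^ l * (1 - p j) ^ (n - l)) = 0 from hS, _root_.div_zero]
  -- main case
  · have hS_pos : 0 < ∑ j, c j :=
      lt_of_le_of_ne (Finset.sum_nonneg fun j _ => hc_nonneg j) (Ne.symm hS)
    have hμA_ne : μ A ≠ 0 := by
      rw [hA_measure]
      simp only [ne_eq, ENNReal.ofReal_eq_zero, not_le]
      positivity
    have : IsProbabilityMeasure (μ[|A]) := cond_isProbabilityMeasure hμA_ne
    have hmapPM : IsProbabilityMeasure ((μ[|A]).map J) :=
      Measure.isProbabilityMeasure_map hJ_meas.aemeasurable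
    have hint : ∫ ω, p (J ω) ∂(μ[|A]) = ∑ j, (((μ[|A]).map J) {j}).toReal • p j := by
      rw [← integral_map hJ_meas.aemeasurable
        (aestronglyMeasurable_iff_aemeasurable.mpr (measurable_from_top (f := p)).aemeasurable)]
      exact integral_fintype Integrable.of_finite
    rw [hint]
    have hterm : ∀ j, (((μ[|A]).map J) {j}).toReal = (C * c j) / (C * ∑ i, c i) := by
      intro j
      rw [Measure.map_apply hJ_meas (measurableSet_singleton j),
        ProbabilityTheory.cond_apply hA_meas]
      have hAJ : A ∩ J ⁻¹' {j} = {ω | J ω = j ∧ N ω = l} := by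
        ext ω
        simp only [Set.mem_inter_iff, Set.mem_preimage, Set.mem_singleton_iff,
          Set.mem_setOf_eq, hA_def]
        tauto
      rw [hAJ, hjl j, hA_measure,
        ← ENNReal.ofReal_inv_of_pos (mul_pos hC_pos hS_pos),
        ← ENNReal.ofReal_mul (by positivity)]
      rw [ENNReal.toReal_ofReal
        (mul_nonneg (by positivity) (mul_nonneg hC_pos.le (hc_nonneg j)))]
      ring
    simp_rw [hterm, smul_eq_mul]
    rw [Finset.sum_div]
    refine Finset.sum_congr rfl fun j _ => ?_
    rw [hc_def]
    field_simp [hC_pos.ne', hS_pos.ne']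
    ring
end

section
/- Let α < 1 and θ > −α with θ + 1, …, θ + n all nonzero, and let p(n_1, …, n_k) = (∏_{i=1}^{k−1}(θ + iα)) · ∏_{j=1}^{k} (1 − α)_{n_j − 1} / (θ+1)_{n−1} be the two-parameter Poisson-Dirichlet EPPF, with n = ∑_{j=1}^k n_j and n_j ≥ 1. Then the EPPF satisfies the addition (consistency) rule p(n_1, …, n_k) = ∑_{j=1}^{k} p(n_1, …, n_j + 1, …, n_k) + p(n_1, …, n_k, 1). -/
open Finset

/-- The rising factorial `(x)_m = x (x+1) ⋯ (x+m-1)`, with `(x)_0 = 1`. -/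
noncomputable def risingFactorial (x : ℝ) (m : ℕ) : ℝ :=
  ∏ i ∈ Finset.range m, (x + i)

/-- The two-parameter Poisson-Dirichlet EPPF
`p(n₁,…,n_k) = (∏_{i=1}^{k-1}(θ+iα)) ∏_{j=1}^k (1-α)_{n_j-1} / (θ+1)_{n-1}`,
where `n = ∑_j n_j`. -/
noncomputable def pdEPPF (α θ : ℝ) {k : ℕ} (m : Fin k → ℕ) : ℝ :=
  (∏ i ∈ Finset.range (k - 1), (θ + (i + 1) * α)) *
    (∏ j, risingFactorial (1 - α) (m j - 1)) / risingFactorial (θ + 1) ((∑ j, m j) - 1)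

lemma rf_succ (x : ℝ) (m : ℕ) :
    risingFactorial x (m + 1) = risingFactorial x m * (x + m) := by
  simp [risingFactorial, Finset.prod_range_succ]

lemma rf_pred (x : ℝ) (m : ℕ) (h : 1 ≤ m) :
    risingFactorial x m = risingFactorial x (m - 1) * (x + m - 1) := by
  obtain ⟨t, rfl⟩ : ∃ t, m = t + 1 := ⟨m - 1, by omega⟩
  rw [rf_succ, Nat.add_sub_cancel]
  push_cast
  ring

/-- The PD(α,θ) EPPF satisfies the addition (consistency) rule
`p(n₁,…,n_k) = ∑_j p(n₁,…,n_j+1,…,n_k) + p(n₁,…,n_k,1)`. -/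
theorem pd_eppf_addition_rule
    (α θ : ℝ) (hα : α < 1) (hθ : θ > -α)
    (k : ℕ) (hk : 1 ≤ k) (m : Fin k → ℕ) (hm : ∀ j, 1 ≤ m j)
    (n : ℕ) (hn : n = ∑ j, m j)
    (hθn : ∀ i : ℕ, 1 ≤ i → i ≤ n → θ + i ≠ 0) :
    pdEPPF α θ m
      = (∑ j, pdEPPF α θ (Function.update m j (m j + 1)))
        + pdEPPF α θ (Fin.snoc m 1 : Fin (k + 1) → ℕ) := by
  set A := ∏ i ∈ Finset.range (k - 1), (θ + ((i : ℝ) + 1) * α) with hA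
  set B := ∏ j, risingFactorial (1 - α) (m j - 1) with hB
  set D := risingFactorial (θ + 1) (n - 1) with hD
  have hkn : k ≤ n := by
    rw [hn]
    calc k = ∑ _j : Fin k, 1 := by simp
    _ ≤ ∑ j, m j := Finset.sum_le_sum fun j _ => hm j
  have hn1 : 1 ≤ n := le_trans hk hkn
  have hDne : D ≠ 0 := by
    rw [hD, risingFactorial]
    rw [Finset.prod_ne_zero_iff]
    intro i hi
    rw [Finset.mem_range] at hi
    have : θ + 1 + (i : ℝ) = θ + ((i + 1 : ℕ) : ℝ) := by push_cast; ring
    rw [this]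
    exact hθn (i + 1) (by omega) (by omega)
  have hθnne : θ + (n : ℝ) ≠ 0 := hθn n hn1 le_rfl
  have hrfn : risingFactorial (θ + 1) n = D * (θ + n) := by
    rw [hD, rf_pred _ _ hn1]
    congr 1
    have : ((n : ℝ)) - 1 = ((n - 1 : ℕ) : ℝ) := by
      rw [Nat.cast_sub hn1]; simp
    ring
  -- update terms
  have hupd : ∀ j, pdEPPF α θ (Function.update m j (m j + 1))
      = A * (B * ((m j : ℝ) - α)) / (D * (θ + n)) := by
    intro j
    have hsum : (∑ i, Function.update m j (m j + 1) i) = n + 1 := by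
      rw [Finset.sum_update_of_mem (Finset.mem_univ j)]
      have h2 := Finset.add_sum_erase Finset.univ m (Finset.mem_univ j)
      rw [show (Finset.univ \ {j}) = Finset.univ.erase j from by
        rw [Finset.sdiff_singleton_eq_erase]]
      omega
    have hprod : (∏ i, risingFactorial (1 - α) (Function.update m j (m j + 1) i - 1))
        = B * ((m j : ℝ) - α) := by
      have hpt : ∀ i, risingFactorial (1 - α) (Function.update m j (m j + 1) i - 1)
          = Function.update (fun i => risingFactorial (1 - α) (m i - 1)) j
              (risingFactorial (1 - α) (m j)) i := by
        intro i
        rcases eq_or_ne i j with rfl | h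
        · simp
        · simp [Function.update_of_ne h]
      rw [Finset.prod_congr rfl (fun i _ => hpt i),
        Finset.prod_update_of_mem (Finset.mem_univ j)]
      rw [show (Finset.univ \ {j}) = Finset.univ.erase j from by
        rw [Finset.sdiff_singleton_eq_erase]]
      rw [rf_pred _ _ (hm j)]
      have hB' : B = risingFactorial (1 - α) (m j - 1) *
          ∏ i ∈ Finset.univ.erase j, risingFactorial (1 - α) (m i - 1) :=
        (Finset.mul_prod_erase Finset.univ _ (Finset.mem_univ j)).symm
      rw [hB']
      ring
    rw [pdEPPF, hsum, Nat.add_sub_cancel, hrfn, hprod, ← hA]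
  -- snoc term
  have hsnoc : pdEPPF α θ (Fin.snoc m 1 : Fin (k + 1) → ℕ)
      = A * (θ + (k : ℝ) * α) * B / (D * (θ + n)) := by
    have hsum : (∑ i : Fin (k + 1), (Fin.snoc m 1 : Fin (k + 1) → ℕ) i) = n + 1 := by
      rw [Fin.sum_univ_castSucc]
      simp [hn]
    have hprod : (∏ i : Fin (k + 1),
        risingFactorial (1 - α) ((Fin.snoc m 1 : Fin (k + 1) → ℕ) i - 1)) = B := by
      rw [Fin.prod_univ_castSucc]
      simp [risingFactorial, hB]
    have hcoef : (∏ i ∈ Finset.range ((k + 1) - 1), (θ + ((i : ℝ) + 1) * α))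
        = A * (θ + (k : ℝ) * α) := by
      have h := Finset.prod_range_succ (fun i => θ + ((i : ℝ) + 1) * α) (k - 1)
      rw [show (k - 1) + 1 = k from by omega] at h
      rw [Nat.add_sub_cancel, h, ← hA,
        show ((k - 1 : ℕ) : ℝ) = (k : ℝ) - 1 from by rw [Nat.cast_sub hk]; simp]
      ring
    rw [pdEPPF, hsum, hcoef, hprod]
    simp only [Nat.add_sub_cancel]
    rw [hrfn]
  rw [hsnoc, Finset.sum_congr rfl (fun j _ => hupd j), ← Finset.sum_div,
    ← add_div]
  have hnum : (∑ j, A * (B * ((m j : ℝ) - α))) + A * (θ + (k : ℝ) * α) * B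
      = (A * B) * (θ + n) := by
    have : (∑ j, A * (B * ((m j : ℝ) - α))) = A * B * ((n : ℝ) - (k : ℝ) * α) := by
      rw [← Finset.mul_sum, ← Finset.mul_sum, Finset.sum_sub_distrib,
        Finset.sum_const, Finset.card_univ, Fintype.card_fin]
      have : (∑ j, ((m j : ℝ))) = (n : ℝ) := by rw [hn]; push_cast; ring
      rw [this]
      ring
    rw [this]
    ring
  rw [hnum, pdEPPF, ← hn, ← hA, ← hB, ← hD, mul_div_mul_right _ _ hθnne]
end
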